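/- If u is continuously differentiable on [0,R], u(0) = 0, and u satisfies u'(r) = -2u(r)/r + G(r) for all r ∈ (0,R] where G is continuous, then the limit of 2u(r)/r as r → 0⁺ exists and equals 2G(0)/3, so that u'(0) = G(0)/3. -/

import Mathlib

open Set Filter Topology

/- Since `u 0 = 0`, the quotient `u r / r` is a difference quotient at the centre, so it tends to
`d = u'(0)`; by continuity of `u'` the equation `u' = -2 u / r + G` passes to the limit `r → 0⁺`
and becomes `d = -2 d + G 0`, whence `d = G 0 / 3`. -/

theorem HasDerivWithinAt.tendsto_div_self {f : ℝ → ℝ} {f' : ℝ} {s : Set ℝ}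
    (hf : HasDerivWithinAt f f' s 0) (h0 : f 0 = 0) :
    Tendsto (fun x => f x / x) (𝓝[s \ {0}] 0) (𝓝 f') :=
  (hasDerivWithinAt_iff_tendsto_slope.mp hf).congr fun x => by
    simp [slope_def_field, h0]

theorem eq_div_of_tendsto_of_eventually_eq {l : Filter ℝ} [l.NeBot] {u u' g : ℝ → ℝ}
    {d g₀ k : ℝ} (hk : 1 + k ≠ 0) (hslope : Tendsto (fun r => u r / r) l (𝓝 d))
    (hu' : Tendsto u' l (𝓝 d)) (hg : Tendsto g l (𝓝 g₀))
    (heq : ∀ᶠ r in l, u' r = -k * u r / r + g r) :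
    d = g₀ / (1 + k) := by
  have hrhs : Tendsto u' l (𝓝 (-k * d + g₀)) := by
    refine ((hslope.const_mul (-k)).add hg).congr' ?_
    filter_upwards [heq] with r hr
    rw [hr, mul_div_assoc]
  have hd : d = -k * d + g₀ := tendsto_nhds_unique hu' hrhs
  rw [eq_div_iff hk]
  linarith

theorem velocity_eq_at_center (R : ℝ) (hR : 0 < R) (u G : ℝ → ℝ)
    (hG : ContinuousOn G (Set.Icc 0 R))
    (hu : ContDiffOn ℝ 1 u (Set.Icc 0 R))
    (hu0 : u 0 = 0)
    (heq : ∀ r ∈ Set.Ioc 0 R,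
      derivWithin u (Set.Icc 0 R) r = -2 * u r / r + G r) :
    Tendsto (fun r => 2 * u r / r) (𝓝[Set.Ioc 0 R] 0) (𝓝 (2 * G 0 / 3)) ∧
      derivWithin u (Set.Icc 0 R) 0 = G 0 / 3 := by
  have := left_nhdsWithin_Ioc_neBot hR
  have h0 : (0 : ℝ) ∈ Icc 0 R := left_mem_Icc.mpr hR.le
  have hIoc : 𝓝[Ioc 0 R] (0 : ℝ) ≤ 𝓝[Icc 0 R] 0 := nhdsWithin_mono 0 Ioc_subset_Icc_self
  have hslope : Tendsto (fun r => u r / r) (𝓝[Ioc 0 R] 0) (𝓝 (derivWithin u (Icc 0 R) 0)) :=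
    ((hu.differentiableOn one_ne_zero 0 h0).hasDerivWithinAt.tendsto_div_self hu0).mono_left
      (nhdsWithin_mono 0 fun r hr => ⟨Ioc_subset_Icc_self hr, hr.1.ne'⟩)
  have hderiv := (hu.continuousOn_derivWithin (uniqueDiffOn_Icc hR) le_rfl 0 h0).mono_left hIoc
  have hd : derivWithin u (Icc 0 R) 0 = G 0 / 3 :=
    (eq_div_of_tendsto_of_eventually_eq (k := 2) (by norm_num) hslope hderiv
      ((hG 0 h0).mono_left hIoc) (eventually_nhdsWithin_of_forall heq)).trans (by norm_num)
  refine ⟨?_, hd⟩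
  rw [hd] at hslope
  convert hslope.const_mul 2 using 2 <;> ring
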